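/- Let σ be a pure 1-Σ₁ sentence and σ^cert := ∃x (cert(x) ∧ σ₀(x)). Then: (1) σ^cert ⊢ σ; (2) if ℕ ⊨ σ then R₀ ⊢ σ^cert; (3) if ℕ ⊨ ¬σ then σ^cert ⊢ R₀ (i.e., σ^cert proves every axiom of R₀). -/

import Mathlib

open FirstOrder FirstOrder.Language

/-- Function symbols of the arithmetic language `L_a = {0, S, +, ×, ≤}`. -/
inductive AFunc : ℕ → Type
  | zero : AFunc 0
  | succ : AFunc 1
  | add : AFunc 2
  | mul : AFunc 2

/-- Relation symbols of `L_a`: the single binary relation `≤`. -/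
inductive ARel : ℕ → Type
  | le : ARel 2

/-- The first-order language of arithmetic `L_a = {0, S, +, ×, ≤}`. -/
def La : Language := ⟨AFunc, ARel⟩

/-- The standard model ℕ as an `La`-structure. -/
instance : La.Structure ℕ where
  funMap := fun {n} f => match f with
    | .zero => fun _ => 0
    | .succ => fun v => v 0 + 1
    | .add => fun v => v 0 + v 1
    | .mul => fun v => v 0 * v 1
  RelMap := fun {n} r => match r with
    | .le => fun v => v 0 ≤ v 1

/-- The term `0`. -/
def zeroT {β : Type} : La.Term β := Term.func AFunc.zero ![]
/-- The term `S t`. -/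
def succT {β : Type} (t : La.Term β) : La.Term β := Term.func AFunc.succ ![t]
/-- The term `t + u`. -/
def addT {β : Type} (t u : La.Term β) : La.Term β := Term.func AFunc.add ![t, u]
/-- The term `t × u`. -/
def mulT {β : Type} (t u : La.Term β) : La.Term β := Term.func AFunc.mul ![t, u]

/-- The numeral `S…S0`. -/
def num {β : Type} : ℕ → La.Term β
  | 0 => zeroT
  | n + 1 => succT (num n)

/-- The atomic formula `t ≤ u`. -/
def leF {α : Type} {n : ℕ} (t u : La.Term (α ⊕ Fin n)) : La.BoundedFormula α n :=
  Relations.boundedFormula ARel.le ![t, u]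

/-- The formula `t < u`, i.e. `t ≤ u ∧ t ≠ u`. -/
def ltF {α : Type} {n : ℕ} (t u : La.Term (α ⊕ Fin n)) : La.BoundedFormula α n :=
  leF t u ⊓ ∼(t =' u)

/-- Lift a term of context `n` to context `n+1`. -/
def liftT {α : Type} {n : ℕ} (t : La.Term (α ⊕ Fin n)) : La.Term (α ⊕ Fin (n + 1)) :=
  t.relabel (Sum.map id Fin.castSucc)

/-- The de Bruijn variable `i` as a term. -/
def vr {α : Type} {n : ℕ} (i : Fin n) : La.Term (α ⊕ Fin n) := Term.var (Sum.inr i)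

/-- The disjunction `⋁_{i ≤ n} x = ī` (with `x` the de Bruijn variable 0). -/
def disjEq : ℕ → La.BoundedFormula Empty 1
  | 0 => (vr 0 : La.Term _) =' num 0
  | n + 1 => disjEq n ⊔ ((vr 0 : La.Term _) =' num (n + 1))

/-- Axiom R1: `m̄ + n̄ = (m+n)̄`. -/
def axR1 (m n : ℕ) : La.Sentence := addT (num m) (num n) =' num (m + n)
/-- Axiom R2: `m̄ × n̄ = (m·n)̄`. -/
def axR2 (m n : ℕ) : La.Sentence := mulT (num m) (num n) =' num (m * n)
/-- Axiom R3: `m̄ ≠ n̄` (for `m ≠ n`). -/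
def axR3 (m n : ℕ) : La.Sentence := ∼((num m : La.Term _) =' num n)
/-- Axiom R4: `∀x (x ≤ n̄ → ⋁_{i ≤ n} x = ī)`. -/
def axR4 (n : ℕ) : La.Sentence := ∀' (leF (vr 0) (num n) ⟹ disjEq n)
/-- Axiom R5': `m̄ ≤ n̄` (for `m ≤ n`). -/
def axR5' (m n : ℕ) : La.Sentence := leF (num m : La.Term (Empty ⊕ Fin 0)) (num n)

/-- The theory `R₀`, axiomatized by R1–R4 and R5'. -/
def R0 : La.Theory :=
  {φ | ∃ m n : ℕ, φ = axR1 m n} ∪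
  {φ | ∃ m n : ℕ, φ = axR2 m n} ∪
  {φ | ∃ m n : ℕ, m ≠ n ∧ φ = axR3 m n} ∪
  {φ | ∃ n : ℕ, φ = axR4 n} ∪
  {φ | ∃ m n : ℕ, m ≤ n ∧ φ = axR5' m n}

/-- Δ₀-formulas of `L_a`: built from atomic formulas by Boolean connectives and
bounded quantifiers `∀ y ≤ t`, `∃ y ≤ t`. -/
inductive IsDelta0 : ∀ {α : Type} {n : ℕ}, La.BoundedFormula α n → Prop
  | falsum {α : Type} {n : ℕ} : IsDelta0 (⊥ : La.BoundedFormula α n)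
  | equal {α : Type} {n : ℕ} (t u : La.Term (α ⊕ Fin n)) : IsDelta0 (t =' u)
  | le {α : Type} {n : ℕ} (t u : La.Term (α ⊕ Fin n)) : IsDelta0 (leF t u)
  | imp {α : Type} {n : ℕ} {φ ψ : La.BoundedFormula α n} :
      IsDelta0 φ → IsDelta0 ψ → IsDelta0 (φ ⟹ ψ)
  | ball {α : Type} {n : ℕ} (t : La.Term (α ⊕ Fin n)) {φ : La.BoundedFormula α (n + 1)} :
      IsDelta0 φ →
      IsDelta0 (∀' (leF (Term.var (Sum.inr (Fin.last n))) (liftT t) ⟹ φ))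
  | bex {α : Type} {n : ℕ} (t : La.Term (α ⊕ Fin n)) {φ : La.BoundedFormula α (n + 1)} :
      IsDelta0 φ →
      IsDelta0 (∃' (leF (Term.var (Sum.inr (Fin.last n))) (liftT t) ⊓ φ))

/-- A Σ₁-formula: an existential block (possibly empty) in front of a Δ₀-formula. -/
def IsSigma1 {α : Type} (φ : La.Formula α) : Prop :=
  ∃ (m : ℕ) (δ : La.BoundedFormula α m), IsDelta0 δ ∧ φ = δ.exs

/-- Pure Δ₀-formulas: Δ₀-formulas in which the atomic subformulas are only
`x₀ = x₁`, `0 = x₀`, `S x₀ = x₁`, `x₀ + x₁ = x₂`, `x₀ × x₁ = x₂`, and `x₀ ≤ x₁`,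
with all arguments variables, and the bounds of bounded quantifiers are variables. -/
inductive IsPureDelta0 : ∀ {α : Type} {n : ℕ}, La.BoundedFormula α n → Prop
  | eq {α : Type} {n : ℕ} (w₁ w₂ : α ⊕ Fin n) :
      IsPureDelta0 ((Term.var w₁ : La.Term _) =' Term.var w₂)
  | zeroEq {α : Type} {n : ℕ} (w : α ⊕ Fin n) :
      IsPureDelta0 ((zeroT : La.Term _) =' Term.var w)
  | succEq {α : Type} {n : ℕ} (w₁ w₂ : α ⊕ Fin n) :
      IsPureDelta0 (succT (Term.var w₁) =' (Term.var w₂ : La.Term _))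
  | addEq {α : Type} {n : ℕ} (w₁ w₂ w₃ : α ⊕ Fin n) :
      IsPureDelta0 (addT (Term.var w₁) (Term.var w₂) =' (Term.var w₃ : La.Term _))
  | mulEq {α : Type} {n : ℕ} (w₁ w₂ w₃ : α ⊕ Fin n) :
      IsPureDelta0 (mulT (Term.var w₁) (Term.var w₂) =' (Term.var w₃ : La.Term _))
  | le {α : Type} {n : ℕ} (w₁ w₂ : α ⊕ Fin n) :
      IsPureDelta0 (leF (Term.var w₁) (Term.var w₂))
  | falsum {α : Type} {n : ℕ} : IsPureDelta0 (⊥ : La.BoundedFormula α n)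
  | imp {α : Type} {n : ℕ} {φ ψ : La.BoundedFormula α n} :
      IsPureDelta0 φ → IsPureDelta0 ψ → IsPureDelta0 (φ ⟹ ψ)
  | ball {α : Type} {n : ℕ} (w : α ⊕ Fin n) {φ : La.BoundedFormula α (n + 1)} :
      IsPureDelta0 φ →
      IsPureDelta0 (∀' (leF (Term.var (Sum.inr (Fin.last n))) (Term.var (Sum.map id Fin.castSucc w)) ⟹ φ))
  | bex {α : Type} {n : ℕ} (w : α ⊕ Fin n) {φ : La.BoundedFormula α (n + 1)} :
      IsPureDelta0 φ →
      IsPureDelta0 (∃' (leF (Term.var (Sum.inr (Fin.last n))) (Term.var (Sum.map id Fin.castSucc w)) ⊓ φ))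

/-- A pure Σ₁-formula: an existential block (possibly empty) in front of a pure Δ₀-formula. -/
def IsPureSigma1 {α : Type} (φ : La.Formula α) : Prop :=
  ∃ (m : ℕ) (δ : La.BoundedFormula α m), IsPureDelta0 δ ∧ φ = δ.exs

/-- A pure 1-Σ₁ sentence: `∃x σ₀(x)` with `σ₀` pure Δ₀ and a single existential quantifier. -/
def IsPure1Sigma1 (σ : La.Sentence) : Prop :=
  ∃ δ : La.BoundedFormula Empty 1, IsPureDelta0 δ ∧ σ = ∃' δ

/- The syntactic certificate: the free variable `v` is the de Bruijn variable `0`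
of a formula in context `1`; each axiom quantifies further variables on top. -/

/-- A1: `0 ≤ v`. -/
def certA1 : La.BoundedFormula Empty 1 := leF zeroT (vr 0)
/-- A2: `∀x < v, S x ≤ v`. -/
def certA2 : La.BoundedFormula Empty 1 :=
  ∀' (ltF (vr 1) (vr 0) ⟹ leF (succT (vr 1)) (vr 0))
/-- A3: `∀x (x ≤ 0 ↔ x = 0)`. -/
def certA3 : La.BoundedFormula Empty 1 :=
  ∀' ((leF (vr 1) zeroT) ⇔ ((vr 1 : La.Term _) =' zeroT))
/-- A4: `∀x < v ∀y (y ≤ Sx ↔ (y ≤ x ∨ y = Sx))`. -/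
def certA4 : La.BoundedFormula Empty 1 :=
  ∀' ∀' (ltF (vr 1) (vr 0) ⟹
    (leF (vr 2) (succT (vr 1)) ⇔ (leF (vr 2) (vr 1) ⊔ ((vr 2 : La.Term _) =' succT (vr 1)))))
/-- A5: `∀x,y,z ≤ v, S((x×y)+z) ≠ 0`. -/
def certA5 : La.BoundedFormula Empty 1 :=
  ∀' ∀' ∀' (leF (vr 1) (vr 0) ⟹ leF (vr 2) (vr 0) ⟹ leF (vr 3) (vr 0) ⟹
    ∼(succT (addT (mulT (vr 1) (vr 2)) (vr 3)) =' (zeroT : La.Term _)))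
/-- A6: `∀x,y,z,w ≤ v, S((x×y)+z) = Sw → (x×y)+z = w`. -/
def certA6 : La.BoundedFormula Empty 1 :=
  ∀' ∀' ∀' ∀' (leF (vr 1) (vr 0) ⟹ leF (vr 2) (vr 0) ⟹ leF (vr 3) (vr 0) ⟹ leF (vr 4) (vr 0) ⟹
    ((succT (addT (mulT (vr 1) (vr 2)) (vr 3)) =' succT (vr 4)) ⟹
      (addT (mulT (vr 1) (vr 2)) (vr 3) =' (vr 4 : La.Term _))))
/-- A7: `∀x,y ≤ v, (x×y)+0 = x×y`. -/
def certA7 : La.BoundedFormula Empty 1 :=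
  ∀' ∀' (leF (vr 1) (vr 0) ⟹ leF (vr 2) (vr 0) ⟹
    (addT (mulT (vr 1) (vr 2)) zeroT =' mulT (vr 1) (vr 2)))
/-- A8: `∀x,y,z ≤ v, (x×y)+Sz = S((x×y)+z)`. -/
def certA8 : La.BoundedFormula Empty 1 :=
  ∀' ∀' ∀' (leF (vr 1) (vr 0) ⟹ leF (vr 2) (vr 0) ⟹ leF (vr 3) (vr 0) ⟹
    (addT (mulT (vr 1) (vr 2)) (succT (vr 3)) =' succT (addT (mulT (vr 1) (vr 2)) (vr 3))))
/-- A9: `∀x ≤ v, x×0 = 0`. -/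
def certA9 : La.BoundedFormula Empty 1 :=
  ∀' (leF (vr 1) (vr 0) ⟹ (mulT (vr 1) zeroT =' (zeroT : La.Term _)))
/-- A10: `∀x,y ≤ v, x×Sy = (x×y)+x`. -/
def certA10 : La.BoundedFormula Empty 1 :=
  ∀' ∀' (leF (vr 1) (vr 0) ⟹ leF (vr 2) (vr 0) ⟹
    (mulT (vr 1) (succT (vr 2)) =' addT (mulT (vr 1) (vr 2)) (vr 1)))

/-- `cert(v)`: the conjunction of the certification axioms A1–A10. -/
def certF : La.BoundedFormula Empty 1 :=
  certA1 ⊓ certA2 ⊓ certA3 ⊓ certA4 ⊓ certA5 ⊓ certA6 ⊓ certA7 ⊓ certA8 ⊓ certA9 ⊓ certA10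

/-- `σ^cert := ∃x (cert(x) ∧ σ₀(x))`. -/
def sigmaCert (σ₀ : La.BoundedFormula Empty 1) : La.Sentence := ∃' (certF ⊓ σ₀)

set_option linter.unusedVariables false
section Infra
variable {M : Type*} [La.Structure M]

def zM (M : Type*) [La.Structure M] : M := Structure.funMap (L := La) AFunc.zero ![]
def sM {M : Type*} [La.Structure M] (x : M) : M := Structure.funMap (L := La) AFunc.succ ![x]
def aM {M : Type*} [La.Structure M] (x y : M) : M := Structure.funMap (L := La) AFunc.add ![x, y]
def mM {M : Type*} [La.Structure M] (x y : M) : M := Structure.funMap (L := La) AFunc.mul ![x, y]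
def lM {M : Type*} [La.Structure M] (x y : M) : Prop := Structure.RelMap (L := La) ARel.le ![x, y]

def nM (M : Type*) [La.Structure M] : ℕ → M
  | 0 => zM M
  | n + 1 => sM (nM M n)

@[simp] lemma realize_zeroT {β : Type} (v : β → M) : Term.realize v (zeroT : La.Term β) = zM M := by
  simp only [zeroT, zM, Term.realize]
  congr; funext i; exact i.elim0

@[simp] lemma realize_succT {β : Type} (v : β → M) (t : La.Term β) :
    Term.realize v (succT t) = sM (Term.realize v t) := by
  simp only [succT, sM, Term.realize]
  congr; funext i; fin_cases i <;> simp

@[simp] lemma realize_addT {β : Type} (v : β → M) (t u : La.Term β) :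
    Term.realize v (addT t u) = aM (Term.realize v t) (Term.realize v u) := by
  simp only [addT, aM, Term.realize]
  congr; funext i; fin_cases i <;> simp

@[simp] lemma realize_mulT {β : Type} (v : β → M) (t u : La.Term β) :
    Term.realize v (mulT t u) = mM (Term.realize v t) (Term.realize v u) := by
  simp only [mulT, mM, Term.realize]
  congr; funext i; fin_cases i <;> simp

@[simp] lemma realize_num {β : Type} (v : β → M) (n : ℕ) :
    Term.realize v (num n : La.Term β) = nM M n := by
  induction n with
  | zero => simp [num, nM]
  | succ n ih => simp [num, nM, ih]

@[simp] lemma realize_leF {α : Type} {n : ℕ} (t u : La.Term (α ⊕ Fin n)) (v : α → M) (xs : Fin n → M) :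
    (leF t u).Realize v xs ↔ lM (Term.realize (Sum.elim v xs) t) (Term.realize (Sum.elim v xs) u) := by
  have : (leF t u).Realize v xs ↔ Structure.RelMap (L := La) ARel.le
      (fun i => Term.realize (Sum.elim v xs) (![t, u] i)) := Iff.rfl
  have key : (fun i => Term.realize (Sum.elim v xs) (![t, u] i))
      = ![Term.realize (Sum.elim v xs) t, Term.realize (Sum.elim v xs) u] := by
    funext i; fin_cases i <;> simp
  rw [this, key]; rfl

@[simp] lemma nM_nat (n : ℕ) : nM ℕ n = n := by
  induction n with
  | zero => rfl
  | succ n ih => show sM (nM ℕ n) = n + 1; rw [ih]; rfl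

@[simp] lemma zM_nat : zM ℕ = 0 := rfl
@[simp] lemma sM_nat (x : ℕ) : sM x = x + 1 := rfl
@[simp] lemma aM_nat (x y : ℕ) : aM x y = x + y := rfl
@[simp] lemma mM_nat (x y : ℕ) : mM x y = x * y := rfl
@[simp] lemma lM_nat (x y : ℕ) : lM x y ↔ x ≤ y := Iff.rfl

end Infra
set_option linter.unusedVariables false
section Cert
variable {M : Type*} [La.Structure M]

lemma certA1_iff (v : Empty → M) (xs : Fin 1 → M) :
    certA1.Realize v xs ↔ lM (zM M) (xs 0) := by
  simp [certA1, vr]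

lemma certA2_iff (v : Empty → M) (xs : Fin 1 → M) :
    certA2.Realize v xs ↔ ∀ x : M, lM x (xs 0) → x ≠ xs 0 → lM (sM x) (xs 0) := by
  simp [certA2, ltF, vr, Fin.snoc, and_imp]

lemma certA3_iff (v : Empty → M) (xs : Fin 1 → M) :
    certA3.Realize v xs ↔ ∀ x : M, lM x (zM M) ↔ x = zM M := by
  simp [certA3, vr, Fin.snoc, BoundedFormula.realize_iff]

lemma certA4_iff (v : Empty → M) (xs : Fin 1 → M) :
    certA4.Realize v xs ↔ ∀ x y : M, lM x (xs 0) → x ≠ xs 0 →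
      (lM y (sM x) ↔ (lM y x ∨ y = sM x)) := by
  simp [certA4, ltF, vr, Fin.snoc, and_imp, BoundedFormula.realize_iff]

lemma certA5_iff (v : Empty → M) (xs : Fin 1 → M) :
    certA5.Realize v xs ↔ ∀ x y z : M, lM x (xs 0) → lM y (xs 0) → lM z (xs 0) →
      sM (aM (mM x y) z) ≠ zM M := by
  simp [certA5, vr, Fin.snoc]

lemma certA6_iff (v : Empty → M) (xs : Fin 1 → M) :
    certA6.Realize v xs ↔ ∀ x y z w : M, lM x (xs 0) → lM y (xs 0) → lM z (xs 0) → lM w (xs 0) →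
      (sM (aM (mM x y) z) = sM w → aM (mM x y) z = w) := by
  simp [certA6, vr, Fin.snoc]

lemma certA7_iff (v : Empty → M) (xs : Fin 1 → M) :
    certA7.Realize v xs ↔ ∀ x y : M, lM x (xs 0) → lM y (xs 0) →
      aM (mM x y) (zM M) = mM x y := by
  simp [certA7, vr, Fin.snoc]

lemma certA8_iff (v : Empty → M) (xs : Fin 1 → M) :
    certA8.Realize v xs ↔ ∀ x y z : M, lM x (xs 0) → lM y (xs 0) → lM z (xs 0) →
      aM (mM x y) (sM z) = sM (aM (mM x y) z) := by
  simp [certA8, vr, Fin.snoc]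

lemma certA9_iff (v : Empty → M) (xs : Fin 1 → M) :
    certA9.Realize v xs ↔ ∀ x : M, lM x (xs 0) → mM x (zM M) = zM M := by
  simp [certA9, vr, Fin.snoc]

lemma certA10_iff (v : Empty → M) (xs : Fin 1 → M) :
    certA10.Realize v xs ↔ ∀ x y : M, lM x (xs 0) → lM y (xs 0) →
      mM x (sM y) = aM (mM x y) x := by
  simp [certA10, vr, Fin.snoc]

/-- Semantic content of `cert(a)`. -/
structure CertAt (M : Type*) [La.Structure M] (a : M) : Prop where
  a1 : lM (zM M) a
  a2 : ∀ x, lM x a → x ≠ a → lM (sM x) a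
  a3 : ∀ x, lM x (zM M) ↔ x = zM M
  a4 : ∀ x y, lM x a → x ≠ a → (lM y (sM x) ↔ (lM y x ∨ y = sM x))
  a5 : ∀ x y z, lM x a → lM y a → lM z a → sM (aM (mM x y) z) ≠ zM M
  a6 : ∀ x y z w, lM x a → lM y a → lM z a → lM w a → sM (aM (mM x y) z) = sM w → aM (mM x y) z = w
  a7 : ∀ x y, lM x a → lM y a → aM (mM x y) (zM M) = mM x y
  a8 : ∀ x y z, lM x a → lM y a → lM z a → aM (mM x y) (sM z) = sM (aM (mM x y) z)
  a9 : ∀ x, lM x a → mM x (zM M) = zM M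
  a10 : ∀ x y, lM x a → lM y a → mM x (sM y) = aM (mM x y) x

lemma certF_iff (v : Empty → M) (xs : Fin 1 → M) :
    certF.Realize v xs ↔ CertAt M (xs 0) := by
  rw [certF]
  simp only [BoundedFormula.realize_inf, certA1_iff, certA2_iff, certA3_iff, certA4_iff,
    certA5_iff, certA6_iff, certA7_iff, certA8_iff, certA9_iff, certA10_iff]
  constructor
  · rintro ⟨⟨⟨⟨⟨⟨⟨⟨⟨h1, h2⟩, h3⟩, h4⟩, h5⟩, h6⟩, h7⟩, h8⟩, h9⟩, h10⟩
    exact ⟨h1, h2, h3, h4, h5, h6, h7, h8, h9, h10⟩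
  · rintro ⟨h1, h2, h3, h4, h5, h6, h7, h8, h9, h10⟩
    exact ⟨⟨⟨⟨⟨⟨⟨⟨⟨h1, h2⟩, h3⟩, h4⟩, h5⟩, h6⟩, h7⟩, h8⟩, h9⟩, h10⟩

end Cert
section CertCons
variable {M : Type*} [La.Structure M]

/-- iterated successor -/
def itS {M : Type*} [La.Structure M] : ℕ → M → M
  | 0, x => x
  | k + 1, x => sM (itS k x)

lemma itS_nM (k p : ℕ) : itS k (nM M p) = nM M (p + k) := by
  induction k with
  | zero => rfl
  | succ k ih => show sM (itS k (nM M p)) = nM M (p + k + 1); rw [ih]; rfl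

variable {a : M} (h : CertAt M a) {B : ℕ}
  (HB : ∀ j ≤ B, lM (nM M j) a) (HNE : ∀ j < B, nM M j ≠ a)

include h HB in
lemma cert_c1 (x y : M) (hx : lM x a) (hy : lM y a) :
    ∀ k ≤ B, aM (mM x y) (nM M k) = itS k (mM x y) := by
  intro k
  induction k with
  | zero => intro _; exact h.a7 x y hx hy
  | succ k ih =>
    intro hk
    have hk' : k ≤ B := Nat.le_of_succ_le hk
    show aM (mM x y) (sM (nM M k)) = sM (itS k (mM x y))
    rw [h.a8 x y (nM M k) hx hy (HB k hk'), ih hk']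

include h in
lemma cert_zz : mM (zM M) (zM M) = zM M := h.a9 _ h.a1

include h HB in
lemma cert_hadd : ∀ p q, p ≤ B → q ≤ B → aM (nM M p) (nM M q) = nM M (p + q) := by
  intro p q hp hq
  rcases Nat.eq_zero_or_pos B with hB | hB
  · subst hB
    interval_cases p
    interval_cases q
    have := cert_c1 h HB (zM M) (zM M) h.a1 h.a1 0 le_rfl
    rw [cert_zz h] at this
    exact this
  · have hmul1 : mM (nM M p) (nM M 1) = nM M p := by
      have e1 : mM (nM M p) (sM (zM M)) = aM (mM (nM M p) (zM M)) (nM M p) :=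
        h.a10 (nM M p) (zM M) (HB p hp) h.a1
      have e2 : mM (nM M p) (zM M) = zM M := h.a9 _ (HB p hp)
      have e3 : aM (zM M) (nM M p) = nM M p := by
        have h4 := cert_c1 h HB (zM M) (zM M) h.a1 h.a1 p hp
        rw [cert_zz h] at h4
        rw [h4]
        have h5 : itS p (nM M 0) = nM M (0 + p) := itS_nM p 0
        rw [Nat.zero_add] at h5
        exact h5
      show mM (nM M p) (nM M 1) = nM M p
      have e0 : (nM M 1 : M) = sM (zM M) := rfl
      rw [e0, e1, e2, e3]
    have h1B : 1 ≤ B := hB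
    calc aM (nM M p) (nM M q) = aM (mM (nM M p) (nM M 1)) (nM M q) := by rw [hmul1]
      _ = itS q (mM (nM M p) (nM M 1)) := cert_c1 h HB _ _ (HB p hp) (HB 1 h1B) q hq
      _ = itS q (nM M p) := by rw [hmul1]
      _ = nM M (p + q) := itS_nM q p

include h HB in
lemma cert_hmul : ∀ p q, p ≤ B → q ≤ B → mM (nM M p) (nM M q) = nM M (p * q) := by
  intro p q hp
  induction q with
  | zero => intro _; exact h.a9 _ (HB p hp)
  | succ q ih =>
    intro hq
    have hq' : q ≤ B := Nat.le_of_succ_le hq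
    have e1 : mM (nM M p) (sM (nM M q)) = aM (mM (nM M p) (nM M q)) (nM M p) :=
      h.a10 _ _ (HB p hp) (HB q hq')
    show mM (nM M p) (sM (nM M q)) = nM M (p * (q + 1))
    rw [e1, cert_c1 h HB (nM M p) (nM M q) (HB p hp) (HB q hq') p hp, ih hq', itS_nM]
    have e2 : p * q + p = p * (q + 1) := by ring
    rw [e2]

/-- arithmetic representation -/
lemma rep_nat (B s : ℕ) (hs : s ≤ B * B + B) : ∃ q r, q ≤ B ∧ r ≤ B ∧ s = B * q + r := by
  rcases Nat.eq_zero_or_pos B with hB | hB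
  · subst hB; exact ⟨0, 0, by omega, by omega, by omega⟩
  · by_cases hq : s / B ≤ B
    · exact ⟨s / B, s % B, hq, (Nat.mod_lt s hB).le, (Nat.div_add_mod s B).symm⟩
    · push_neg at hq
      have h1 : B * (B + 1) ≤ s := by
        calc B * (B + 1) ≤ B * (s / B) := Nat.mul_le_mul_left B hq
          _ = s / B * B := Nat.mul_comm _ _
          _ ≤ s := Nat.div_mul_le_self s B
      have h2 : B * B + B ≤ s := by nlinarith [h1]
      have h3 : s = B * B + B := le_antisymm hs h2
      exact ⟨B, B, le_rfl, le_rfl, by rw [h3]⟩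

include h HB in
lemma cert_repM (s : ℕ) (hs : s ≤ B * B + B) :
    ∃ x y z : M, lM x a ∧ lM y a ∧ lM z a ∧ nM M s = aM (mM x y) z := by
  obtain ⟨q, r, hq, hr, hrep⟩ := rep_nat B s hs
  refine ⟨nM M B, nM M q, nM M r, HB B le_rfl, HB q hq, HB r hr, ?_⟩
  rw [cert_c1 h HB (nM M B) (nM M q) (HB B le_rfl) (HB q hq) r hr,
    cert_hmul h HB B q le_rfl hq, itS_nM, hrep]

include h HB in
lemma cert_sne (s : ℕ) (hs : s ≤ B * B + B) : sM (nM M s) ≠ zM M := by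
  obtain ⟨x, y, z, hx, hy, hz, e⟩ := cert_repM h HB s hs
  rw [e]
  exact h.a5 x y z hx hy hz

include h HB in
lemma cert_sinj (s w : ℕ) (hs : s ≤ B * B + B) (hw : w ≤ B)
    (e : sM (nM M s) = sM (nM M w)) : nM M s = nM M w := by
  obtain ⟨x, y, z, hx, hy, hz, e'⟩ := cert_repM h HB s hs
  rw [e'] at e ⊢
  exact h.a6 x y z (nM M w) hx hy hz (HB w hw) e

include h HB in
lemma cert_hinj : ∀ r ≤ B, ∀ s ≤ B * B + B + 1, nM M s = nM M r → s = r := by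
  intro r
  induction r with
  | zero =>
    rintro _ (_ | s) hs e
    · rfl
    · exact absurd e (cert_sne h HB s (by omega))
  | succ r ih =>
    rintro hr (_ | s) hs e
    · exact absurd e.symm (cert_sne h HB r (by nlinarith))
    · have : nM M s = nM M r :=
        cert_sinj h HB s r (by omega) (by omega) e
      have := ih (by omega) s (by omega) this
      omega

include h HB HNE in
lemma cert_hchar : ∀ k ≤ B, ∀ y, lM y (nM M k) ↔ ∃ j ≤ k, y = nM M j := by
  intro k
  induction k with
  | zero =>
    intro _ y
    have h3 := h.a3 y
    constructor
    · intro hy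
      exact ⟨0, le_rfl, h3.1 hy⟩
    · rintro ⟨j, hj, rfl⟩
      interval_cases j
      exact h3.2 rfl
  | succ k ih =>
    intro hk y
    have hk' : k ≤ B := Nat.le_of_succ_le hk
    have h4 := h.a4 (nM M k) y (HB k hk') (HNE k hk)
    constructor
    · intro hy
      rcases h4.1 hy with hy' | rfl
      · obtain ⟨j, hj, rfl⟩ := (ih hk' y).1 hy'
        exact ⟨j, by omega, rfl⟩
      · exact ⟨k + 1, le_rfl, rfl⟩
    · rintro ⟨j, hj, rfl⟩
      rcases Nat.lt_succ_iff_lt_or_eq.1 (Nat.lt_succ_of_le hj) with hj' | rfl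
      · exact h4.2 (Or.inl ((ih hk' _).2 ⟨j, by omega, rfl⟩))
      · exact h4.2 (Or.inr rfl)

include h HB HNE in
lemma cert_hle : ∀ p q, p ≤ B → q ≤ B → (lM (nM M p) (nM M q) ↔ p ≤ q) := by
  intro p q hp hq
  constructor
  · intro hl
    obtain ⟨j, hj, e⟩ := (cert_hchar h HB HNE q hq _).1 hl
    have := cert_hinj h HB j (hj.trans hq) p (by nlinarith) e
    omega
  · intro hpq
    exact (cert_hchar h HB HNE q hq _).2 ⟨p, hpq, rfl⟩

end CertCons
section Transfer
variable {M : Type*} [La.Structure M]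

lemma transfer (B : ℕ)
    (hadd : ∀ p q, p ≤ B → q ≤ B → aM (nM M p) (nM M q) = nM M (p + q))
    (hmul : ∀ p q, p ≤ B → q ≤ B → mM (nM M p) (nM M q) = nM M (p * q))
    (hinj : ∀ r ≤ B, ∀ s ≤ B * B + B + 1, nM M s = nM M r → s = r)
    (hle : ∀ p q, p ≤ B → q ≤ B → (lM (nM M p) (nM M q) ↔ p ≤ q))
    (hchar : ∀ k ≤ B, ∀ y, lM y (nM M k) → ∃ j ≤ k, y = nM M j) :
    ∀ {α' : Type} {n' : ℕ} {φ' : La.BoundedFormula α' n'}, IsPureDelta0 φ' →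
      ∀ (vα : α' → ℕ) (vn : Fin n' → ℕ), (∀ i, vα i ≤ B) → (∀ i, vn i ≤ B) →
      (φ'.Realize (fun i => nM M (vα i)) (fun i => nM M (vn i)) ↔ φ'.Realize vα vn) := by
  intro α' n' φ' hφ'
  have hnum : ∀ {α : Type} {n : ℕ} (vα : α → ℕ) (vn : Fin n → ℕ) (w : α ⊕ Fin n),
      Sum.elim (fun i => nM M (vα i)) (fun i => nM M (vn i)) w = nM M (Sum.elim vα vn w) := by
    rintro α n vα vn (i | i) <;> rfl
  induction hφ' with
  | eq w₁ w₂ =>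
    intro vα vn hvα hvn
    have hb : ∀ w, Sum.elim vα vn w ≤ B := by rintro (i | i); exacts [hvα i, hvn i]
    simp only [BoundedFormula.realize_bdEqual, Term.realize_var, hnum]
    constructor
    · intro e; exact hinj _ (hb w₂) _ (by nlinarith [hb w₁]) e
    · intro e; rw [e]
  | zeroEq w =>
    intro vα vn hvα hvn
    have hb : ∀ w, Sum.elim vα vn w ≤ B := by rintro (i | i); exacts [hvα i, hvn i]
    simp only [BoundedFormula.realize_bdEqual, Term.realize_var, realize_zeroT, hnum, zM_nat]
    have e0 : (zM M : M) = nM M 0 := rfl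
    rw [e0]
    constructor
    · intro e; exact hinj _ (hb w) 0 (by nlinarith) e
    · intro e; rw [← e]
  | succEq w₁ w₂ =>
    intro vα vn hvα hvn
    have hb : ∀ w, Sum.elim vα vn w ≤ B := by rintro (i | i); exacts [hvα i, hvn i]
    simp only [BoundedFormula.realize_bdEqual, Term.realize_var, realize_succT, hnum, sM_nat]
    have e0 : sM (nM M (Sum.elim vα vn w₁)) = nM M (Sum.elim vα vn w₁ + 1) := rfl
    rw [e0]
    constructor
    · intro e; exact hinj _ (hb w₂) _ (by nlinarith [hb w₁]) e
    · intro e; rw [← e]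
  | addEq w₁ w₂ w₃ =>
    intro vα vn hvα hvn
    have hb : ∀ w, Sum.elim vα vn w ≤ B := by rintro (i | i); exacts [hvα i, hvn i]
    simp only [BoundedFormula.realize_bdEqual, Term.realize_var, realize_addT, hnum, aM_nat]
    rw [hadd _ _ (hb w₁) (hb w₂)]
    constructor
    · intro e; exact hinj _ (hb w₃) _ (by nlinarith [hb w₁, hb w₂]) e
    · intro e; rw [← e]
  | mulEq w₁ w₂ w₃ =>
    intro vα vn hvα hvn
    have hb : ∀ w, Sum.elim vα vn w ≤ B := by rintro (i | i); exacts [hvα i, hvn i]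
    simp only [BoundedFormula.realize_bdEqual, Term.realize_var, realize_mulT, hnum, mM_nat]
    rw [hmul _ _ (hb w₁) (hb w₂)]
    constructor
    · intro e; exact hinj _ (hb w₃) _ (by nlinarith [hb w₁, hb w₂]) e
    · intro e; rw [← e]
  | le w₁ w₂ =>
    intro vα vn hvα hvn
    have hb : ∀ w, Sum.elim vα vn w ≤ B := by rintro (i | i); exacts [hvα i, hvn i]
    rw [realize_leF, realize_leF]
    simp only [Term.realize_var, hnum]
    rw [hle _ _ (hb w₁) (hb w₂)]
    exact (lM_nat _ _).symm
  | falsum =>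
    intro vα vn hvα hvn
    exact Iff.rfl
  | imp _ _ ihφ ihψ =>
    intro vα vn hvα hvn
    simp only [BoundedFormula.realize_imp]
    rw [ihφ vα vn hvα hvn, ihψ vα vn hvα hvn]
  | ball w _ ih =>
    intro vα vn hvα hvn
    have hb : ∀ w, Sum.elim vα vn w ≤ B := by rintro (i | i); exacts [hvα i, hvn i]
    simp only [BoundedFormula.realize_all, BoundedFormula.realize_imp, realize_leF,
      Term.realize_var]
    have hsnocv : ∀ y : M, Sum.elim (fun i => nM M (vα i))
        (Fin.snoc (fun i => nM M (vn i)) y) (Sum.map id Fin.castSucc w)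
        = nM M (Sum.elim vα vn w) := by
      intro y
      rcases w with i | i
      · rfl
      · simp
    have hsnocn : ∀ y : ℕ, Sum.elim vα (Fin.snoc vn y) (Sum.map id Fin.castSucc w)
        = Sum.elim vα vn w := by
      intro y
      rcases w with i | i
      · rfl
      · simp
    have e : ∀ k : ℕ, (Fin.snoc (fun i => nM M (vn i)) (nM M k))
        = fun i => nM M ((Fin.snoc vn k : Fin _ → ℕ) i) := by
      intro k
      funext i
      induction i using Fin.lastCases <;> simp
    constructor
    · intro hM k
      simp only [Sum.elim_inr, Fin.snoc_last, hsnocn, lM_nat]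
      intro hk
      have hkB : k ≤ B := hk.trans (hb w)
      have h1 := hM (nM M k)
      simp only [Sum.elim_inr, Fin.snoc_last, hsnocv] at h1
      have h2 := h1 ((hle k _ hkB (hb w)).2 hk)
      rw [e k] at h2
      have hbs : ∀ i, (Fin.snoc vn k : Fin _ → ℕ) i ≤ B := by
        intro i
        induction i using Fin.lastCases with
        | last => simpa using hkB
        | cast i => simpa using hvn i
      exact (ih vα (Fin.snoc vn k) hvα hbs).1 h2
    · intro hN y
      simp only [Sum.elim_inr, Fin.snoc_last, hsnocv]
      intro hy
      obtain ⟨k, hk, rfl⟩ := hchar _ (hb w) y hy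
      have h1 := hN k
      simp only [Sum.elim_inr, Fin.snoc_last, hsnocn, lM_nat] at h1
      have h2 := h1 hk
      have hbs : ∀ i, (Fin.snoc vn k : Fin _ → ℕ) i ≤ B := by
        intro i
        induction i using Fin.lastCases with
        | last => simpa using hk.trans (hb w)
        | cast i => simpa using hvn i
      have h3 := (ih vα (Fin.snoc vn k) hvα hbs).2 h2
      rw [e k]
      exact h3
  | bex w _ ih =>
    intro vα vn hvα hvn
    have hb : ∀ w, Sum.elim vα vn w ≤ B := by rintro (i | i); exacts [hvα i, hvn i]
    simp only [BoundedFormula.realize_ex, BoundedFormula.realize_inf, realize_leF,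
      Term.realize_var]
    have hsnocv : ∀ y : M, Sum.elim (fun i => nM M (vα i))
        (Fin.snoc (fun i => nM M (vn i)) y) (Sum.map id Fin.castSucc w)
        = nM M (Sum.elim vα vn w) := by
      intro y
      rcases w with i | i
      · rfl
      · simp
    have hsnocn : ∀ y : ℕ, Sum.elim vα (Fin.snoc vn y) (Sum.map id Fin.castSucc w)
        = Sum.elim vα vn w := by
      intro y
      rcases w with i | i
      · rfl
      · simp
    have e : ∀ k : ℕ, (Fin.snoc (fun i => nM M (vn i)) (nM M k))
        = fun i => nM M ((Fin.snoc vn k : Fin _ → ℕ) i) := by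
      intro k
      funext i
      induction i using Fin.lastCases <;> simp
    constructor
    · rintro ⟨y, hy, hφy⟩
      simp only [Sum.elim_inr, Fin.snoc_last, hsnocv] at hy
      obtain ⟨k, hk, rfl⟩ := hchar _ (hb w) y hy
      have hbs : ∀ i, (Fin.snoc vn k : Fin _ → ℕ) i ≤ B := by
        intro i
        induction i using Fin.lastCases with
        | last => simpa using hk.trans (hb w)
        | cast i => simpa using hvn i
      refine ⟨k, ?_, ?_⟩
      · simp only [Sum.elim_inr, Fin.snoc_last, hsnocn, lM_nat]; exact hk
      · rw [e k] at hφy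
        exact (ih vα (Fin.snoc vn k) hvα hbs).1 hφy
    · rintro ⟨k, hk, hφk⟩
      simp only [Sum.elim_inr, Fin.snoc_last, hsnocn, lM_nat] at hk
      have hbs : ∀ i, (Fin.snoc vn k : Fin _ → ℕ) i ≤ B := by
        intro i
        induction i using Fin.lastCases with
        | last => simpa using hk.trans (hb w)
        | cast i => simpa using hvn i
      refine ⟨nM M k, ?_, ?_⟩
      · simp only [Sum.elim_inr, Fin.snoc_last, hsnocv]
        exact (hle k _ (hk.trans (hb w)) (hb w)).2 hk
      · rw [e k]
        exact (ih vα (Fin.snoc vn k) hvα hbs).2 hφk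

end Transfer
section R0Facts
variable {M : Type*} [La.Structure M]

lemma disjEq_iff (n : ℕ) (v : Empty → M) (xs : Fin 1 → M) :
    (disjEq n).Realize v xs ↔ ∃ j ≤ n, xs 0 = nM M j := by
  induction n with
  | zero =>
    simp only [disjEq, BoundedFormula.realize_bdEqual, Term.realize_var, vr, realize_num,
      Sum.elim_inr]
    constructor
    · intro e; exact ⟨0, le_rfl, e⟩
    · rintro ⟨j, hj, e⟩; interval_cases j; exact e
  | succ n ih =>
    simp only [disjEq, BoundedFormula.realize_sup, ih, BoundedFormula.realize_bdEqual,
      Term.realize_var, vr, realize_num, Sum.elim_inr]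
    constructor
    · rintro (⟨j, hj, e⟩ | e)
      · exact ⟨j, by omega, e⟩
      · exact ⟨n + 1, le_rfl, e⟩
    · rintro ⟨j, hj, e⟩
      rcases Nat.lt_succ_iff_lt_or_eq.1 (Nat.lt_succ_of_le hj) with hj' | rfl
      · exact Or.inl ⟨j, by omega, e⟩
      · exact Or.inr e

lemma realize_axR1 (m n : ℕ) : (M ⊨ axR1 m n) ↔ aM (nM M m) (nM M n) = nM M (m + n) := by
  simp [axR1, Sentence.Realize, Formula.Realize]

lemma realize_axR2 (m n : ℕ) : (M ⊨ axR2 m n) ↔ mM (nM M m) (nM M n) = nM M (m * n) := by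
  simp [axR2, Sentence.Realize, Formula.Realize]

lemma realize_axR3 (m n : ℕ) : (M ⊨ axR3 m n) ↔ nM M m ≠ nM M n := by
  simp [axR3, Sentence.Realize, Formula.Realize]

lemma realize_axR4 (n : ℕ) : (M ⊨ axR4 n) ↔ ∀ y : M, lM y (nM M n) → ∃ j ≤ n, y = nM M j := by
  rw [Sentence.Realize, axR4, Formula.Realize, BoundedFormula.realize_all]
  apply forall_congr'
  intro y
  rw [BoundedFormula.realize_imp, realize_leF, disjEq_iff]
  simp [vr, Fin.snoc]

lemma realize_axR5' (m n : ℕ) : (M ⊨ axR5' m n) ↔ lM (nM M m) (nM M n) := by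
  rw [Sentence.Realize, axR5', Formula.Realize, realize_leF]
  simp

lemma memR1 (m n : ℕ) : axR1 m n ∈ R0 := by
  simp only [R0, Set.mem_union, Set.mem_setOf_eq]
  exact Or.inl (Or.inl (Or.inl (Or.inl ⟨m, n, rfl⟩)))
lemma memR2 (m n : ℕ) : axR2 m n ∈ R0 := by
  simp only [R0, Set.mem_union, Set.mem_setOf_eq]
  exact Or.inl (Or.inl (Or.inl (Or.inr ⟨m, n, rfl⟩)))
lemma memR3 (m n : ℕ) (h : m ≠ n) : axR3 m n ∈ R0 := by
  simp only [R0, Set.mem_union, Set.mem_setOf_eq]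
  exact Or.inl (Or.inl (Or.inr ⟨m, n, h, rfl⟩))
lemma memR4 (n : ℕ) : axR4 n ∈ R0 := by
  simp only [R0, Set.mem_union, Set.mem_setOf_eq]
  exact Or.inl (Or.inr ⟨n, rfl⟩)
lemma memR5 (m n : ℕ) (h : m ≤ n) : axR5' m n ∈ R0 := by
  simp only [R0, Set.mem_union, Set.mem_setOf_eq]
  exact Or.inr ⟨m, n, h, rfl⟩

variable [R0.Model M]

lemma r0_add (m n : ℕ) : aM (nM M m) (nM M n) = nM M (m + n) :=
  (realize_axR1 m n).1 (R0.realize_sentence_of_mem (M := M) (memR1 m n))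
lemma r0_mul (m n : ℕ) : mM (nM M m) (nM M n) = nM M (m * n) :=
  (realize_axR2 m n).1 (R0.realize_sentence_of_mem (M := M) (memR2 m n))
lemma r0_ne (m n : ℕ) (h : m ≠ n) : nM M m ≠ nM M n :=
  (realize_axR3 m n).1 (R0.realize_sentence_of_mem (M := M) (memR3 m n h))
lemma r0_char (n : ℕ) : ∀ y : M, lM y (nM M n) → ∃ j ≤ n, y = nM M j :=
  (realize_axR4 n).1 (R0.realize_sentence_of_mem (M := M) (memR4 n))
lemma r0_le (m n : ℕ) (h : m ≤ n) : lM (nM M m) (nM M n) :=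
  (realize_axR5' m n).1 (R0.realize_sentence_of_mem (M := M) (memR5 m n h))

lemma r0_inj {m n : ℕ} (e : nM M m = nM M n) : m = n := by
  by_contra h
  exact r0_ne m n h e

lemma r0_le_iff (m n : ℕ) : lM (nM M m) (nM M n) ↔ m ≤ n := by
  constructor
  · intro hl
    obtain ⟨j, hj, e⟩ := r0_char n _ hl
    have := r0_inj (M := M) e
    omega
  · exact r0_le m n

lemma r0_cert (n : ℕ) : CertAt M (nM M n) := by
  have hz : (zM M : M) = nM M 0 := rfl
  constructor
  · rw [hz]; exact r0_le 0 n (by omega)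
  · intro x hx hne
    obtain ⟨j, hj, rfl⟩ := r0_char n x hx
    have hjn : j ≠ n := fun e => hne (by rw [e])
    show lM (nM M (j + 1)) (nM M n)
    exact r0_le _ _ (by omega)
  · intro x
    rw [hz]
    constructor
    · intro hx
      obtain ⟨j, hj, rfl⟩ := r0_char 0 x hx
      interval_cases j
      rfl
    · rintro rfl
      exact r0_le 0 0 le_rfl
  · intro x y hx hne
    obtain ⟨j, hj, rfl⟩ := r0_char n x hx
    have hjn : j < n := lt_of_le_of_ne hj (fun e => hne (by rw [e]))
    have hs : sM (nM M j) = nM M (j + 1) := rfl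
    rw [hs]
    constructor
    · intro hy
      obtain ⟨k, hk, rfl⟩ := r0_char (j + 1) y hy
      rcases Nat.lt_succ_iff_lt_or_eq.1 (Nat.lt_succ_of_le hk) with hk' | rfl
      · exact Or.inl (r0_le k j (by omega))
      · exact Or.inr rfl
    · rintro (hy | rfl)
      · obtain ⟨k, hk, rfl⟩ := r0_char j y hy
        exact r0_le k (j + 1) (by omega)
      · exact r0_le (j + 1) (j + 1) le_rfl
  · intro x y z hx hy hz'
    obtain ⟨i, _, rfl⟩ := r0_char n x hx
    obtain ⟨j, _, rfl⟩ := r0_char n y hy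
    obtain ⟨k, _, rfl⟩ := r0_char n z hz'
    rw [r0_mul, r0_add, hz]
    show nM M (i * j + k + 1) ≠ nM M 0
    exact r0_ne _ _ (by omega)
  · intro x y z w hx hy hz' hw
    obtain ⟨i, _, rfl⟩ := r0_char n x hx
    obtain ⟨j, _, rfl⟩ := r0_char n y hy
    obtain ⟨k, _, rfl⟩ := r0_char n z hz'
    obtain ⟨l, _, rfl⟩ := r0_char n w hw
    rw [r0_mul, r0_add]
    intro e
    have e' : nM M (i * j + k + 1) = nM M (l + 1) := e
    have := r0_inj (M := M) e'
    have : i * j + k = l := by omega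
    rw [this]
  · intro x y hx hy
    obtain ⟨i, _, rfl⟩ := r0_char n x hx
    obtain ⟨j, _, rfl⟩ := r0_char n y hy
    rw [r0_mul, hz, r0_add]
    norm_num
  · intro x y z hx hy hz'
    obtain ⟨i, _, rfl⟩ := r0_char n x hx
    obtain ⟨j, _, rfl⟩ := r0_char n y hy
    obtain ⟨k, _, rfl⟩ := r0_char n z hz'
    rw [r0_mul]
    have hs : sM (nM M k) = nM M (k + 1) := rfl
    rw [hs, r0_add, r0_add]
    rfl
  · intro x hx
    obtain ⟨i, _, rfl⟩ := r0_char n x hx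
    rw [hz, r0_mul]
    norm_num
  · intro x y hx hy
    obtain ⟨i, _, rfl⟩ := r0_char n x hx
    obtain ⟨j, _, rfl⟩ := r0_char n y hy
    have hs : sM (nM M j) = nM M (j + 1) := rfl
    rw [hs, r0_mul, r0_mul, r0_add]
    have : i * (j + 1) = i * j + i := by ring
    rw [this]

end R0Facts
section Assemble

lemma sentence_realize_iff {N : Type*} [La.Structure N] (φ : La.Sentence) (v : Empty → N)
    (xs : Fin 0 → N) : BoundedFormula.Realize φ v xs ↔ N ⊨ φ := by
  unfold Sentence.Realize Formula.Realize
  rw [Subsingleton.elim v default, Subsingleton.elim xs default]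

lemma sentence_realize_any {N : Type*} [La.Structure N] (φ : La.Sentence) (hφ : N ⊨ φ)
    (v : Empty → N) (xs : Fin 0 → N) : BoundedFormula.Realize φ v xs :=
  (sentence_realize_iff φ v xs).2 hφ

lemma snoc_zero {N : Type*} (xs : Fin 0 → N) (c : N) :
    (Fin.snoc xs c : Fin 1 → N) = fun _ => c := by
  funext i
  simp [Fin.snoc]

variable {M : Type*} [La.Structure M]

lemma cert_dichotomy {a : M} (h : CertAt M a) :
    (∀ j : ℕ, lM (nM M j) a ∧ nM M j ≠ a) ∨
    ∃ i, nM M i = a ∧ (∀ j ≤ i, lM (nM M j) a) ∧ (∀ j < i, nM M j ≠ a) := by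
  by_cases H : ∀ j : ℕ, lM (nM M j) a ∧ nM M j ≠ a
  · exact Or.inl H
  · right
    have hex : ∃ j, ¬(lM (nM M j) a ∧ nM M j ≠ a) := not_forall.1 H
    classical
    set i := Nat.find hex with hi
    have hmin : ∀ j < i, lM (nM M j) a ∧ nM M j ≠ a := fun j hj =>
      of_not_not (Nat.find_min hex hj)
    have hle : lM (nM M i) a := by
      rcases Nat.eq_zero_or_pos i with h0 | h0
      · rw [h0]; exact h.a1
      · obtain ⟨i', hi'⟩ := Nat.exists_eq_succ_of_ne_zero h0.ne'
        have hm := hmin i' (by omega)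
        rw [hi']
        exact h.a2 _ hm.1 hm.2
    have heq : nM M i = a := by
      have hspec := Nat.find_spec hex
      rw [← hi] at hspec
      by_contra hne
      exact hspec ⟨hle, hne⟩
    refine ⟨i, heq, ?_, fun j hj => (hmin j hj).2⟩
    intro j hj
    rcases lt_or_eq_of_le hj with hj' | rfl
    · exact (hmin j hj').1
    · exact hle

variable {a : M} (h : CertAt M a) (H : ∀ j : ℕ, lM (nM M j) a ∧ nM M j ≠ a)
include h H

lemma scen_add (m n : ℕ) : aM (nM M m) (nM M n) = nM M (m + n) :=
  cert_hadd h (B := m + n) (fun j _ => (H j).1) m n (by omega) (by omega)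

lemma scen_mul (m n : ℕ) : mM (nM M m) (nM M n) = nM M (m * n) :=
  cert_hmul h (B := max m n) (fun j _ => (H j).1) m n (le_max_left _ _) (le_max_right _ _)

lemma scen_ne (m n : ℕ) (hmn : m ≠ n) : nM M m ≠ nM M n := by
  intro e
  have hm : m ≤ max m n := le_max_left _ _
  have := cert_hinj h (B := max m n) (fun j _ => (H j).1) n (le_max_right _ _) m
    (by nlinarith) e
  exact hmn this

lemma scen_char (n : ℕ) : ∀ y : M, lM y (nM M n) → ∃ j ≤ n, y = nM M j := fun y hy =>
  (cert_hchar h (B := n) (fun j _ => (H j).1) (fun j _ => (H j).2) n le_rfl y).1 hy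

lemma scen_le (m n : ℕ) (hmn : m ≤ n) : lM (nM M m) (nM M n) :=
  (cert_hchar h (B := n) (fun j _ => (H j).1) (fun j _ => (H j).2) n le_rfl (nM M m)).2
    ⟨m, hmn, rfl⟩

end Assemble
/-- for a pure 1-Σ₁ sentence `σ = ∃x σ₀(x)`:
(1) `σ^cert ⊢ σ`; (2) if `ℕ ⊨ σ` then `R₀ ⊢ σ^cert`; (3) if `ℕ ⊨ ¬σ` then `σ^cert ⊢ R₀`. -/
theorem statement10 (σ₀ : La.BoundedFormula Empty 1) (hσ₀ : IsPureDelta0 σ₀) :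
    (({sigmaCert σ₀} : La.Theory) ⊨ᵇ (∃' σ₀ : La.Sentence)) ∧
    ((ℕ ⊨ (∃' σ₀ : La.Sentence)) → R0 ⊨ᵇ sigmaCert σ₀) ∧
    (¬ (ℕ ⊨ (∃' σ₀ : La.Sentence)) → ∀ φ ∈ R0, ({sigmaCert σ₀} : La.Theory) ⊨ᵇ φ) := by
  refine ⟨?_, ?_, ?_⟩
  · -- (1)
    intro M v xs
    have hM : (M : Type _) ⊨ sigmaCert σ₀ :=
      Theory.realize_sentence_of_mem (T := ({sigmaCert σ₀} : La.Theory)) (Set.mem_singleton _)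
    have hM' : BoundedFormula.Realize (∃' (certF ⊓ σ₀)) v xs := sentence_realize_any _ hM v xs
    rw [BoundedFormula.realize_ex] at hM' ⊢
    obtain ⟨b, hb⟩ := hM'
    exact ⟨b, (BoundedFormula.realize_inf.1 hb).2⟩
  · -- (2)
    intro hσ M v xs
    have hσ'' : BoundedFormula.Realize (∃' σ₀) (default : Empty → ℕ) (default : Fin 0 → ℕ) :=
      (sentence_realize_iff _ _ _).2 hσ
    obtain ⟨b, hb⟩ := BoundedFormula.realize_ex.1 hσ''
    rw [snoc_zero] at hb
    have ht := (transfer (M := M) b (fun p q _ _ => r0_add p q) (fun p q _ _ => r0_mul p q)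
      (fun r _ s _ e => r0_inj e) (fun p q _ _ => r0_le_iff p q)
      (fun k _ y hy => r0_char k y hy)
      hσ₀ (default : Empty → ℕ) (fun _ => b) (fun i => i.elim) (fun _ => le_rfl)).2 hb
    show BoundedFormula.Realize (∃' (certF ⊓ σ₀)) v xs
    rw [BoundedFormula.realize_ex]
    refine ⟨nM M b, BoundedFormula.realize_inf.2 ⟨?_, ?_⟩⟩
    · rw [certF_iff]
      simp only [snoc_zero]
      exact r0_cert b
    · rw [snoc_zero]
      have e : v = (fun i : Empty => nM M ((default : Empty → ℕ) i)) := Subsingleton.elim _ _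
      rw [e]
      exact ht
  · -- (3)
    intro hσN φ hφmem M v xs
    have hM : (M : Type _) ⊨ sigmaCert σ₀ :=
      Theory.realize_sentence_of_mem (T := ({sigmaCert σ₀} : La.Theory)) (Set.mem_singleton _)
    have hM' : BoundedFormula.Realize (∃' (certF ⊓ σ₀)) (default : Empty → M)
      (default : Fin 0 → M) := hM
    obtain ⟨c, hc⟩ := BoundedFormula.realize_ex.1 hM'
    rw [snoc_zero] at hc
    have hcert : CertAt M c := by
      have h1 := (BoundedFormula.realize_inf.1 hc).1
      rw [certF_iff] at h1
      exact h1
    have hs0 : σ₀.Realize (default : Empty → M) (fun _ => c) :=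
      (BoundedFormula.realize_inf.1 hc).2
    rcases cert_dichotomy hcert with H | ⟨i, heq, HB, HNE⟩
    · simp only [R0, Set.mem_union, Set.mem_setOf_eq] at hφmem
      rcases hφmem with ((((⟨m,n,rfl⟩|⟨m,n,rfl⟩)|⟨m,n,hmn,rfl⟩)|⟨n,rfl⟩)|⟨m,n,hmn,rfl⟩)
      · exact sentence_realize_any _ ((realize_axR1 m n).2 (scen_add hcert H m n)) v xs
      · exact sentence_realize_any _ ((realize_axR2 m n).2 (scen_mul hcert H m n)) v xs
      · exact sentence_realize_any _ ((realize_axR3 m n).2 (scen_ne hcert H m n hmn)) v xs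
      · exact sentence_realize_any _ ((realize_axR4 n).2 (scen_char hcert H n)) v xs
      · exact sentence_realize_any _ ((realize_axR5' m n).2 (scen_le hcert H m n hmn)) v xs
    · exfalso
      apply hσN
      have hMside : σ₀.Realize (fun e : Empty => nM M ((default : Empty → ℕ) e))
          (fun _ : Fin 1 => nM M i) := by
        have e1 : (fun e : Empty => nM M ((default : Empty → ℕ) e)) = (default : Empty → M) :=
          Subsingleton.elim _ _
        have e2 : (fun _ : Fin 1 => nM M i) = (fun _ : Fin 1 => c) := by
          funext j; rw [heq]
        rw [e1, e2]
        exact hs0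
      have ht := (transfer (M := M) i (cert_hadd hcert HB) (cert_hmul hcert HB)
        (cert_hinj hcert HB) (cert_hle hcert HB HNE)
        (fun k hk y hy => (cert_hchar hcert HB HNE k hk y).1 hy)
        hσ₀ (default : Empty → ℕ) (fun _ => i) (fun e => e.elim) (fun _ => le_rfl)).1 hMside
      refine (sentence_realize_iff (∃' σ₀) (default : Empty → ℕ) (default : Fin 0 → ℕ)).1 ?_
      rw [BoundedFormula.realize_ex]
      refine ⟨i, ?_⟩
      rw [snoc_zero]
      exact ht
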